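/- Let D- be a canonical negative Boolean automaton double-cycle with both cycle sizes n and m even, n,m ≥ 2. Then every configuration is reachable from every other configuration by a sequence of asynchronous single-automaton updates; consequently, the asynchronous transition graph of D- consists of a single terminal strongly connected component containing all 2^{n+m-1} configurations. -/

import Mathlib

/-- A configuration of a Boolean automaton double-cycle with cycles of sizes `n`
and `m`: the shared automaton `c` is index 0 of both cycles (so valid
configurations satisfy `x.1 0 = x.2 0`). -/
abbrev Cfg (n m : ℕ) := (Fin n → Bool) × (Fin m → Bool)

/-- One asynchronous single-automaton update in a double-cycle whose shared
automaton `c` computes `fc`; every non-shared automaton copies its predecessor. -/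
inductive Step {n m : ℕ} (fc : Cfg n m → Bool) : Cfg n m → Cfg n m → Prop
  | left (x : Cfg n m) (i : Fin n) (hi : 1 ≤ i.val) :
      Step fc x (Function.update x.1 i (x.1 ⟨i.val - 1, by have := i.isLt; omega⟩), x.2)
  | right (x : Cfg n m) (j : Fin m) (hj : 1 ≤ j.val) :
      Step fc x (x.1, Function.update x.2 j (x.2 ⟨j.val - 1, by have := j.isLt; omega⟩))
  | center (x : Cfg n m) (i : Fin n) (j : Fin m) (hi : i.val = 0) (hj : j.val = 0) :
      Step fc x (Function.update x.1 i (fc x), Function.update x.2 j (fc x))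

/-- `Steps fc k x y`: configuration `y` is obtained from `x` by exactly `k`
asynchronous single-automaton updates. -/
def Steps {n m : ℕ} (fc : Cfg n m → Bool) : ℕ → Cfg n m → Cfg n m → Prop
  | 0, x, y => x = y
  | k + 1, x, y => ∃ z, Step fc x z ∧ Steps fc k z y

/-!
Firing `c` and then flooding both cycles with its value reaches a constant configuration; from
the all-`true` one a second firing leads to `allFalse`. So `allFalse` is reachable from
everywhere.

Flipping the cells at even positions (`dual`) reverses transitions between valid configurations:
a copy that changes cell `i` becomes, after flipping, a copy that changes it back, and since `n`
and `m` are even, `f_c` reads only odd cells, which are not flipped, so a firing of `c` reverses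
as well. Hence `dual allFalse` reaches every valid `y`, because `dual y` reaches `allFalse`.

It remains to reach `dual allFalse`, the alternating configuration `1010…`, from `allFalse`.
Keeping the left cycle constant turns `f_c` into a toggle, so shifting the right cycle before
each firing writes an alternating word into it. Once it is there, shifting both cycles before
each firing keeps `f_c` alternating and writes the alternating word into the left cycle too.
-/

open Function Relation

namespace DoubleCycle

section Cycle

variable {k : ℕ}

def window (k : ℕ) (a : ℕ → Bool) : Fin k → Bool := fun i => a i

lemma exists_window_eq (u : Fin k → Bool) : ∃ a, window k a = u :=
  ⟨fun i => if h : i < k then u ⟨i, h⟩ else false, funext fun i => dif_pos i.isLt⟩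

lemma window_congr {a b : ℕ → Bool} (h : ∀ i < k, a i = b i) : window k a = window k b :=
  funext fun i => h i i.isLt

lemma update_window (a : ℕ → Bool) (i : Fin k) (c : Bool) :
    update (window k a) i c = window k (update a i c) := by
  funext j
  simp [window, update_apply, Fin.ext_iff]

def CopyStep (u v : Fin k → Bool) : Prop :=
  ∃ (i : Fin k) (hi : 1 ≤ i.val), v = update u i (u ⟨i.val - 1, by have := i.isLt; omega⟩)

lemma copyStep_window (a : ℕ → Bool) {i : ℕ} (hi : 1 ≤ i) (hik : i < k) :
    CopyStep (window k a) (window k (update a i (a (i - 1)))) :=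
  ⟨⟨i, hik⟩, hi, (update_window a ⟨i, hik⟩ _).symm⟩

lemma copies_flood (a : ℕ → Bool) :
    ReflTransGen CopyStep (window k a) (window k fun _ => a 0) := by
  have flooded : ∀ j < k,
      ReflTransGen CopyStep (window k a) (window k fun i => if i ≤ j then a 0 else a i) := by
    intro j
    induction j with
    | zero =>
      intro _
      convert ReflTransGen.refl using 1
      refine window_congr fun i _ => ?_
      split_ifs with h
      · rw [Nat.le_zero.mp h]
      · rfl
    | succ j ih =>
      intro hj
      refine (ih (by omega)).tail ?_
      convert copyStep_window _ (Nat.le_add_left 1 j) hj using 2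
      funext i
      simp only [update_apply]
      split_ifs <;> first | rfl | omega
  rcases k with _ | k
  · rw [Subsingleton.elim (window 0 a)]
  · convert flooded k k.lt_succ_self using 1
    exact window_congr fun i hi => (if_pos (by omega)).symm

lemma copies_shift (a : ℕ → Bool) :
    ReflTransGen CopyStep (window k a) (window k fun i => a (i - 1)) := by
  have shifted : ∀ d < k,
      ReflTransGen CopyStep (window k a)
        (window k fun i => if k - d ≤ i then a (i - 1) else a i) := by
    intro d
    induction d with
    | zero =>
      intro _
      convert ReflTransGen.refl using 1
      exact window_congr fun i hi => if_neg (by omega)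
    | succ d ih =>
      intro hd
      refine (ih (by omega)).tail ?_
      convert copyStep_window (k := k) (fun i => if k - d ≤ i then a (i - 1) else a i)
        (i := k - (d + 1)) (by omega) (by omega) using 2
      funext i
      simp only [update_apply]
      split_ifs <;> first | rfl | omega | (congr 1; omega)
  rcases k with _ | k
  · rw [Subsingleton.elim (window 0 a)]
  · convert shifted k k.lt_succ_self using 1
    refine window_congr fun i _ => ?_
    split_ifs with h
    · rfl
    · rw [show i = 0 by omega]

end Cycle

section Moves

variable {n m : ℕ} (fc : Cfg n m → Bool)

lemma step_left_of_copyStep {u u' : Fin n → Bool} (h : CopyStep u u') (w : Fin m → Bool) :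
    Step fc (u, w) (u', w) := by
  obtain ⟨i, hi, rfl⟩ := h
  exact Step.left _ i hi

lemma step_right_of_copyStep (u : Fin n → Bool) {w w' : Fin m → Bool} (h : CopyStep w w') :
    Step fc (u, w) (u, w') := by
  obtain ⟨j, hj, rfl⟩ := h
  exact Step.right _ j hj

lemma reach_left {u u' : Fin n → Bool} (h : ReflTransGen CopyStep u u') (w : Fin m → Bool) :
    ReflTransGen (Step fc) (u, w) (u', w) :=
  h.lift (fun u => (u, w)) fun _ _ h => step_left_of_copyStep fc h w

lemma reach_right (u : Fin n → Bool) {w w' : Fin m → Bool} (h : ReflTransGen CopyStep w w') :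
    ReflTransGen (Step fc) (u, w) (u, w') :=
  h.lift (fun w => (u, w)) fun _ _ h => step_right_of_copyStep fc u h

variable [NeZero n] [NeZero m]

lemma step_center_window (a b : ℕ → Bool) {v : Bool} (hv : fc (window n a, window m b) = v) :
    Step fc (window n a, window m b) (window n (update a 0 v), window m (update b 0 v)) := by
  have := Step.center (fc := fc) (window n a, window m b) 0 0 rfl rfl
  simpa only [hv, update_window, Fin.val_zero] using this

lemma reach_pushBoth (a b : ℕ → Bool) {v : Bool}
    (hv : fc (window n fun i => a (i - 1), window m fun j => b (j - 1)) = v) :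
    ReflTransGen (Step fc) (window n a, window m b)
      (window n (update (fun i => a (i - 1)) 0 v), window m (update (fun j => b (j - 1)) 0 v)) :=
  (reach_left fc (copies_shift a) _).trans <| (reach_right fc _ (copies_shift b)).tail <|
    step_center_window fc _ _ hv

lemma reach_pushRight_floodLeft (c : Bool) (b : ℕ → Bool) {v : Bool}
    (hv : fc (window n fun _ => c, window m fun j => b (j - 1)) = v) :
    ReflTransGen (Step fc) (window n fun _ => c, window m b)
      (window n fun _ => v, window m (update (fun j => b (j - 1)) 0 v)) := by
  have h := (reach_right fc _ (copies_shift b)).tail (step_center_window fc _ _ hv)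
  simpa only [update_self] using h.trans (reach_left fc (copies_flood _) _)

end Moves

section Duality

variable {k : ℕ}

def flipEven (u : Fin k → Bool) : Fin k → Bool := fun i => xor (u i) (decide (i.val % 2 = 0))

lemma flipEven_flipEven (u : Fin k → Bool) : flipEven (flipEven u) = u := by
  funext i
  simp [flipEven]

lemma flipEven_update (u : Fin k → Bool) (i : Fin k) (c : Bool) :
    flipEven (update u i c) = update (flipEven u) i (xor c (decide (i.val % 2 = 0))) := by
  funext j
  by_cases h : j = i
  · subst h; simp [flipEven]
  · simp [flipEven, update_of_ne h]

lemma copyStep_flipEven {u v : Fin k → Bool} (h : CopyStep u v) :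
    v = u ∨ CopyStep (flipEven v) (flipEven u) := by
  obtain ⟨i, hi, rfl⟩ := h
  set j : Fin k := ⟨i.val - 1, by have := i.isLt; omega⟩
  by_cases hu : u i = u j
  · exact .inl (update_eq_self_iff.mpr hu.symm)
  · refine .inr ⟨i, hi, ?_⟩
    have hji : j ≠ i := fun h => by simp [j, Fin.ext_iff] at h; omega
    have hpar : decide (j.val % 2 = 0) = !decide (i.val % 2 = 0) := by
      simp only [j]
      by_cases h : i.val % 2 = 0 <;> simp [h] <;> omega
    rw [flipEven_update, update_idem, update_of_ne hji, eq_comm, update_eq_self_iff]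
    revert hu
    simp only [flipEven, hpar]
    cases u i <;> cases u j <;> cases decide (i.val % 2 = 0) <;> simp

variable {n m : ℕ}

def dual (x : Cfg n m) : Cfg n m := (flipEven x.1, flipEven x.2)

lemma dual_dual (x : Cfg n m) : dual (dual x) = x := by
  simp [dual, flipEven_flipEven]

variable [NeZero n] [NeZero m]

def Valid (x : Cfg n m) : Prop := x.1 0 = x.2 0

lemma Valid.dual {x : Cfg n m} (hx : Valid x) : Valid (dual x) := by
  simpa [Valid, DoubleCycle.dual, flipEven] using hx

lemma Valid.step {fc : Cfg n m → Bool} {a b : Cfg n m} (ha : Valid a) (h : Step fc a b) :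
    Valid b := by
  cases h with
  | left i hi => simpa [Valid, update_of_ne (a := (0 : Fin n)) (a' := i) (by
      intro h; simp [← h] at hi)] using ha
  | right j hj => simpa [Valid, update_of_ne (a := (0 : Fin m)) (a' := j) (by
      intro h; simp [← h] at hj)] using ha
  | center i j hi hj =>
    obtain rfl : i = 0 := Fin.ext hi
    obtain rfl : j = 0 := Fin.ext hj
    simp [Valid]

end Duality

lemma two_le_of_even {k : ℕ} [NeZero k] (hk : Even k) : 2 ≤ k := by
  obtain ⟨r, rfl⟩ := hk
  have := NeZero.ne (r + r)
  omega

section Negative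

variable {n m : ℕ} [NeZero n] [NeZero m]

def negCenter (n m : ℕ) [NeZero n] [NeZero m] (x : Cfg n m) : Bool :=
  !x.1 ⟨n - 1, Nat.sub_one_lt (NeZero.ne n)⟩ && !x.2 ⟨m - 1, Nat.sub_one_lt (NeZero.ne m)⟩

local notation "Reach" => ReflTransGen (Step (negCenter n m))

def allFalse : Cfg n m := (fun _ => false, fun _ => false)

lemma reach_const (x : Cfg n m) :
    Reach x (fun _ => negCenter n m x, fun _ => negCenter n m x) := by
  obtain ⟨u, w⟩ := x
  obtain ⟨a, rfl⟩ := exists_window_eq u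
  obtain ⟨b, rfl⟩ := exists_window_eq w
  have h := ReflTransGen.single (step_center_window (negCenter n m) a b rfl)
  have h' := h.trans (reach_left _ (copies_flood _) _) |>.trans (reach_right _ _ (copies_flood _))
  simp only [update_self] at h'
  exact h'

lemma reach_allFalse (x : Cfg n m) : Reach x allFalse := by
  have h := reach_const x
  cases hx : negCenter n m x <;> rw [hx] at h
  · exact h
  · exact h.trans (reach_const _)

lemma negCenter_dual (hn : Even n) (hm : Even m) (x : Cfg n m) :
    negCenter n m (dual x) = negCenter n m x := by
  have := two_le_of_even hn
  have := two_le_of_even hm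
  rw [Nat.even_iff] at hn hm
  simp only [negCenter, dual, flipEven]
  rw [decide_eq_false (by omega), decide_eq_false (by omega), Bool.xor_false, Bool.xor_false]

lemma negCenter_update_zero (hn : 2 ≤ n) (hm : 2 ≤ m) (x : Cfg n m) (v w : Bool) :
    negCenter n m (update x.1 0 v, update x.2 0 w) = negCenter n m x := by
  simp only [negCenter]
  rw [update_of_ne (by simp [Fin.ext_iff]; omega), update_of_ne (by simp [Fin.ext_iff]; omega)]

lemma step_dual (hn : Even n) (hm : Even m) {a b : Cfg n m} (ha : Valid a)
    (h : Step (negCenter n m) a b) : b = a ∨ Step (negCenter n m) (dual b) (dual a) := by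
  cases h with
  | left i hi =>
    refine (copyStep_flipEven ⟨i, hi, rfl⟩).imp (fun h => Prod.ext h rfl) fun h => ?_
    exact step_left_of_copyStep _ h _
  | right j hj =>
    refine (copyStep_flipEven ⟨j, hj, rfl⟩).imp (fun h => Prod.ext rfl h) fun h => ?_
    exact step_right_of_copyStep _ _ h
  | center i j hi hj =>
    obtain rfl : i = 0 := Fin.ext hi
    obtain rfl : j = 0 := Fin.ext hj
    by_cases hc : negCenter n m a = a.1 0
    · exact .inl (Prod.ext (update_eq_self_iff.mpr hc) (update_eq_self_iff.mpr (hc.trans ha)))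
    · right
      convert Step.center (fc := negCenter n m) (dual _) 0 0 rfl rfl using 1
      rw [negCenter_dual hn hm, negCenter_update_zero (two_le_of_even hn) (two_le_of_even hm)]
      simp only [dual, flipEven_update, update_idem]
      have hv : negCenter n m a = !a.1 0 := Bool.eq_not_iff.mpr hc
      have ha : a.1 0 = a.2 0 := ha
      refine Prod.ext (update_eq_self_iff.mpr ?_).symm (update_eq_self_iff.mpr ?_).symm <;>
        simp [flipEven, hv, ha]

lemma reach_dual (hn : Even n) (hm : Even m) {a b : Cfg n m} (h : Reach a b) (ha : Valid a) :
    Reach (dual b) (dual a) := by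
  induction h using ReflTransGen.head_induction_on with
  | refl => rfl
  | head hab _ ih =>
    rcases step_dual hn hm ha hab with rfl | h
    · exact ih ha
    · exact (ih (ha.step hab)).tail h

/-- Truncated subtraction makes this vanish for `i ≥ p`: the word `p % 2, …, 0, 1` on `[0, p)`,
followed by zeros. -/
def alternating (p : ℕ) : ℕ → Bool := fun i => decide ((p - i) % 2 = 1)

lemma alternating_zero : alternating 0 = fun _ => false := by
  funext i
  simp [alternating]

lemma update_alternating (p : ℕ) :
    update (fun i => alternating p (i - 1)) 0 (alternating (p + 1) 0) = alternating (p + 1) := by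
  funext i
  rcases i with _ | i
  · rfl
  · simp [alternating]

lemma reach_alternating_right {r : ℕ} (hr : r < m) :
    Reach allFalse (window n fun _ => alternating r 0, window m (alternating r)) := by
  induction r with
  | zero => rw [alternating_zero]; rfl
  | succ r ih =>
    have h := reach_pushRight_floodLeft (negCenter n m) (alternating r 0) (alternating r)
      (v := alternating (r + 1) 0) ?_
    · rw [update_alternating] at h
      exact (ih (by omega)).trans h
    simp only [negCenter, window, alternating]
    rw [show r - (m - 1 - 1) = 0 by omega]
    rcases Nat.mod_two_eq_zero_or_one r with h | h <;> simp [h, Nat.add_mod]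

lemma reach_alternating_both (hn : Even n) (hm : Even m) (s : ℕ) :
    Reach allFalse (window n (alternating s), window m (alternating (s + (m - 2)))) := by
  have := two_le_of_even hm
  rw [Nat.even_iff] at hn hm
  induction s with
  | zero =>
    rw [zero_add]
    convert reach_alternating_right (n := n) (m := m) (r := m - 2) (by omega) using 3
    rw [alternating_zero]
    simp [alternating, show (m - 2) % 2 = 0 by omega]
  | succ s ih =>
    have hv : alternating (s + 1) 0 = alternating (s + (m - 2) + 1) 0 := by
      simp [alternating, Nat.add_mod, show (m - 2) % 2 = 0 by omega]
    refine ih.trans ?_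
    convert reach_pushBoth (negCenter n m) (alternating s) (alternating (s + (m - 2)))
      (v := alternating (s + 1) 0) ?_ using 3
    · rw [update_alternating]
    · rw [hv, update_alternating, Nat.add_right_comm]
    simp only [negCenter, window, alternating]
    rw [show s + (m - 2) - (m - 1 - 1) = s by omega]
    rcases Nat.mod_two_eq_zero_or_one s with h | h
    · simp [h, show (s - (n - 1 - 1)) % 2 = 0 by omega, Nat.add_mod]
    · simp [h, Nat.add_mod]

lemma reach_dual_allFalse (hn : Even n) (hm : Even m) : Reach allFalse (dual allFalse) := by
  convert reach_alternating_both hn hm (n - 1) using 1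
  have := two_le_of_even hn
  have := two_le_of_even hm
  rw [Nat.even_iff] at hn hm
  refine Prod.ext (funext fun i => ?_) (funext fun j => ?_) <;>
    simp only [dual, allFalse, flipEven, window, alternating, Bool.false_xor, decide_eq_decide]
  · have := i.isLt; omega
  · have := j.isLt; omega

theorem reach_of_valid (hn : Even n) (hm : Even m) (x : Cfg n m) {y : Cfg n m} (hy : Valid y) :
    Reach x y := by
  have h := reach_dual hn hm (reach_allFalse (dual y)) hy.dual
  rw [dual_dual] at h
  exact (reach_allFalse x).trans ((reach_dual_allFalse hn hm).trans h)

end Negative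

lemma card_agreeAt {α β : Type*} [Fintype α] [Fintype β] [DecidableEq α] [DecidableEq β]
    (a : α) (b : β) :
    Fintype.card {p : (α → Bool) × (β → Bool) // p.1 a = p.2 b} =
      2 ^ (Fintype.card α + Fintype.card β - 1) := by
  let e : {p : (α → Bool) × (β → Bool) // p.1 a = p.2 b} ≃
      (α → Bool) × ({j // j ≠ b} → Bool) :=
    { toFun p := (p.1.1, fun j => p.1.2 j)
      invFun q := ⟨(q.1, fun j => if h : j = b then q.1 a else q.2 ⟨j, h⟩), by simp⟩
      left_inv p := by
        ext j
        · rfl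
        · by_cases h : j = b
          · subst h; simpa using p.2
          · simp [h]
      right_inv q := Prod.ext rfl (funext fun j => by simp [j.2]) }
  have : Nonempty β := ⟨b⟩
  have := Fintype.card_pos (α := β)
  rw [Fintype.card_congr e]
  simp [Fintype.card_subtype_compl, ← pow_add]
  omega

end DoubleCycle

theorem stmt14 (n m : ℕ) (hn : 2 ≤ n) (hm : 2 ≤ m)
    (hne : n % 2 = 0) (hme : m % 2 = 0) :
    (∀ x y : Cfg n m,
      x.1 ⟨0, by omega⟩ = x.2 ⟨0, by omega⟩ →
      y.1 ⟨0, by omega⟩ = y.2 ⟨0, by omega⟩ →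
      Relation.ReflTransGen
        (Step (fun z : Cfg n m => !(z.1 ⟨n - 1, by omega⟩) && !(z.2 ⟨m - 1, by omega⟩)))
        x y) ∧
    Fintype.card {p : Cfg n m // p.1 ⟨0, by omega⟩ = p.2 ⟨0, by omega⟩}
      = 2 ^ (n + m - 1) := by
  have : NeZero n := ⟨by omega⟩
  have : NeZero m := ⟨by omega⟩
  refine ⟨fun x y _ hy =>
    DoubleCycle.reach_of_valid (Nat.even_iff.mpr hne) (Nat.even_iff.mpr hme) x hy, ?_⟩
  exact (Fintype.card_congr (Equiv.refl _)).trans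
    ((DoubleCycle.card_agreeAt (0 : Fin n) (0 : Fin m)).trans (by simp))
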